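/- arXiv:2605.09985 — 3 statements merged into one kernel-verified Lean document; each statement's English description precedes it below -/
import Mathlib

section
/- Forward direction of the biclique reduction: Let G be a bipartite graph with parts L = {u_1,…,u_n} and R = {v_1,…,v_m}, let M = n+1, and construct a corpus of m·M tuples in Σ^n where for each j ∈ {1,…,m} and ℓ ∈ {1,…,M}, the tuple p^{(j,ℓ)} has i-th coordinate a_i if (u_i,v_j) is an edge of G, and a fresh distinct symbol b_{i,j,ℓ} otherwise. If there exist S ⊆ L and T ⊆ R forming a complete bipartite subgraph (every pair in S×T is an edge) with |S|·|T| ≥ k, then the position set S' = {i : u_i ∈ S} satisfies U(S') ≥ M·k, where U(S') = |S'|·occ(S') with occ computed against reference tuple (a_1,…,a_n). -/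
/-- Number of corpus tuples matching reference tuple `a` on all coordinates in `S`. -/
def occ {n : ℕ} {Sig : Type*} [DecidableEq Sig] (corpus : List (Fin n → Sig))
    (a : Fin n → Sig) (S : Finset (Fin n)) : ℕ :=
  corpus.countP (fun p => decide (∀ i ∈ S, p i = a i))

/-- Compression utility `U(S) = |S| · occ(S)`. -/
def U {n : ℕ} {Sig : Type*} [DecidableEq Sig] (corpus : List (Fin n → Sig))
    (a : Fin n → Sig) (S : Finset (Fin n)) : ℕ :=
  S.card * occ corpus a S

/-- The corpus of the biclique reduction: for each right vertex `j` and each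
`ℓ ∈ {1,…,M}` (with `M = n+1`), a tuple whose `i`-th coordinate is `a i` when
`(u_i, v_j)` is an edge and the fresh symbol `b i j ℓ` otherwise. -/
noncomputable def redCorpus {n m : ℕ} {Sig : Type*} (E : Fin n → Fin m → Prop)
    [∀ i j, Decidable (E i j)] (a : Fin n → Sig)
    (b : Fin n → Fin m → Fin (n + 1) → Sig) : List (Fin n → Sig) :=
  (Finset.univ : Finset (Fin m × Fin (n + 1))).toList.map
    (fun jl => fun i => if E i jl.1 then a i else b i jl.1 jl.2)

/-- Forward direction of the biclique reduction: a biclique `(S, T)` with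
`|S|·|T| ≥ k` yields a position set `S` with `U(S) ≥ M·k`, where `M = n+1`. -/
theorem stmt2 {n m : ℕ} {Sig : Type*} [DecidableEq Sig]
    (E : Fin n → Fin m → Prop) [∀ i j, Decidable (E i j)]
    (a : Fin n → Sig) (b : Fin n → Fin m → Fin (n + 1) → Sig)
    (hb : ∀ i j ℓ, b i j ℓ ≠ a i)
    (S : Finset (Fin n)) (T : Finset (Fin m)) (k : ℕ)
    (hbic : ∀ i ∈ S, ∀ j ∈ T, E i j)
    (hk : k ≤ S.card * T.card) :
    (n + 1) * k ≤ U (redCorpus E a b) a S := by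
  have hocc : (n + 1) * T.card ≤ occ (redCorpus E a b) a S := by
    unfold occ redCorpus
    rw [List.countP_map]
    have hmono :
        List.countP (fun jl : Fin m × Fin (n + 1) => decide (jl.1 ∈ T))
            (Finset.univ : Finset (Fin m × Fin (n + 1))).toList ≤
          List.countP
            ((fun p => decide (∀ i ∈ S, p i = a i)) ∘
              fun jl => fun i => if E i jl.1 then a i else b i jl.1 jl.2)
            (Finset.univ : Finset (Fin m × Fin (n + 1))).toList := by
      apply List.countP_mono_left
      intro jl _ hjl
      simp only [decide_eq_true_eq] at hjl
      simp only [Function.comp, decide_eq_true_eq]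
      intro i hi
      rw [if_pos (hbic i hi jl.1 hjl)]
    refine le_trans ?_ hmono
    have : List.countP (fun jl : Fin m × Fin (n + 1) => decide (jl.1 ∈ T))
        (Finset.univ : Finset (Fin m × Fin (n + 1))).toList =
        (Finset.univ.filter (fun jl : Fin m × Fin (n + 1) => jl.1 ∈ T)).card := by
      rw [← Multiset.coe_countP, Finset.coe_toList, Finset.filter, Finset.card]
      exact (Multiset.countP_eq_card_filter _ _)
    rw [this]
    have hcard : (Finset.univ.filter (fun jl : Fin m × Fin (n + 1) => jl.1 ∈ T))
        = T ×ˢ (Finset.univ : Finset (Fin (n + 1))) := by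
      ext jl; simp
    rw [hcard, Finset.card_product, Finset.card_univ, Fintype.card_fin]
    rw [Nat.mul_comm]
  calc (n + 1) * k ≤ (n + 1) * (S.card * T.card) := Nat.mul_le_mul_left _ hk
    _ = S.card * ((n + 1) * T.card) := by ring
    _ ≤ S.card * occ (redCorpus E a b) a S := Nat.mul_le_mul_left _ hocc
    _ = U (redCorpus E a b) a S := rfl
end

section
/- Reverse direction of the biclique reduction: With the same construction as above (corpus of m·M tuples, M = n+1, coordinates a_i on edges and fresh symbols otherwise), for any subset S ⊆ {1,…,n} of positions, occ(S) = M·|T| where T = {v_j ∈ R : (u_i, v_j) ∈ E for all i ∈ S}. Consequently, if U(S) = |S|·occ(S) ≥ M·k, then the pair (S' = {u_i : i ∈ S}, T) is a biclique of G with |S'|·|T| ≥ k. -/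
lemma countP_toList {α : Type*} (s : Finset α) (p : α → Bool) :
    s.toList.countP p = (s.filter (fun a => p a)).card := by
  classical
  have h2 : (↑s.toList : Multiset α) = s.val := Multiset.coe_toList s.val
  have h1 : s.toList.countP p = Multiset.countP (fun a => p a = true) s.val := by
    rw [← h2, Multiset.coe_countP]
    congr 1
    funext x
    simp
  rw [h1, Finset.card_filter, Finset.sum_boole]
  simp [Multiset.countP_eq_card_filter, Finset.filter]

/-- Reverse direction of the biclique reduction: for any position set `S`,
`occ(S) = M · |T|` where `T` is the set of right vertices adjacent to every
`u_i, i ∈ S`; consequently `U(S) ≥ M·k` yields the biclique `(S, T)` with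
`|S|·|T| ≥ k`. -/
theorem stmt3 {n m : ℕ} {Sig : Type*} [DecidableEq Sig]
    (E : Fin n → Fin m → Prop) [∀ i j, Decidable (E i j)]
    (a : Fin n → Sig) (b : Fin n → Fin m → Fin (n + 1) → Sig)
    (hb : ∀ i j ℓ, b i j ℓ ≠ a i)
    (S : Finset (Fin n)) :
    occ (redCorpus E a b) a S =
      (n + 1) * (Finset.univ.filter (fun j : Fin m => ∀ i ∈ S, E i j)).card ∧
    ∀ k : ℕ, (n + 1) * k ≤ U (redCorpus E a b) a S →
      (∀ i ∈ S, ∀ j ∈ Finset.univ.filter (fun j : Fin m => ∀ i ∈ S, E i j), E i j) ∧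
      k ≤ S.card * (Finset.univ.filter (fun j : Fin m => ∀ i ∈ S, E i j)).card := by
  have key : occ (redCorpus E a b) a S =
      (n + 1) * (Finset.univ.filter (fun j : Fin m => ∀ i ∈ S, E i j)).card := by
    unfold occ redCorpus
    rw [List.countP_map, countP_toList]
    have hpred : ∀ jl : Fin m × Fin (n + 1),
        (decide (∀ i ∈ S, (fun i => if E i jl.1 then a i else b i jl.1 jl.2) i = a i))
          = decide (∀ i ∈ S, E i jl.1) := by
      intro jl
      simp only [decide_eq_decide]
      constructor
      · intro h i hi
        by_contra hE
        have := h i hi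
        simp only [if_neg hE] at this
        exact hb i jl.1 jl.2 this
      · intro h i hi
        simp [if_pos (h i hi)]
    have : (Finset.univ.filter (fun jl : Fin m × Fin (n + 1) =>
        (decide (∀ i ∈ S, (fun i => if E i jl.1 then a i else b i jl.1 jl.2) i = a i) : Bool)))
        = (Finset.univ.filter (fun j : Fin m => ∀ i ∈ S, E i j)) ×ˢ
          (Finset.univ : Finset (Fin (n + 1))) := by
      ext jl
      simp only [Finset.mem_filter, Finset.mem_univ, true_and, and_true, Finset.mem_product,
        decide_eq_true_eq]
      constructor
      · intro h i hi
        by_contra hE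
        have := h i hi
        rw [if_neg hE] at this
        exact hb i jl.1 jl.2 this
      · intro h i hi
        rw [if_pos (h i hi)]
    simp only [Function.comp]
    rw [this, Finset.card_product]
    simp [Nat.mul_comm]
  refine ⟨key, fun k hk => ⟨fun i hi j hj => (Finset.mem_filter.mp hj).2 i hi, ?_⟩⟩
  unfold U at hk
  rw [key] at hk
  have : (n + 1) * k ≤ (n + 1) * (S.card *
      (Finset.univ.filter (fun j : Fin m => ∀ i ∈ S, E i j)).card) := by
    calc (n + 1) * k ≤ S.card * ((n + 1) *
        (Finset.univ.filter (fun j : Fin m => ∀ i ∈ S, E i j)).card) := hk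
      _ = _ := by ring
  exact Nat.le_of_mul_le_mul_left this (Nat.succ_pos n)
end

section
/- Equivalence of the decision problems: with the reduction construction (M = n+1, ω = M·k), the bipartite graph G contains a biclique (S,T) with |S|·|T| ≥ k if and only if there exists a position set S ⊆ {1,…,n} with U(S) ≥ ω. -/
lemma occ_red {n m : ℕ} {Sig : Type*} [DecidableEq Sig]
    (E : Fin n → Fin m → Prop) [∀ i j, Decidable (E i j)]
    (a : Fin n → Sig) (b : Fin n → Fin m → Fin (n + 1) → Sig)
    (hb : ∀ i j ℓ, b i j ℓ ≠ a i) (S : Finset (Fin n)) :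
    occ (redCorpus E a b) a S
      = (n + 1) * (Finset.univ.filter (fun j : Fin m => ∀ i ∈ S, E i j)).card := by
  unfold occ redCorpus
  rw [List.countP_map]
  simp only [Function.comp_def]
  have hpred : ∀ jl : Fin m × Fin (n + 1),
      (∀ i ∈ S, (if E i jl.1 then a i else b i jl.1 jl.2) = a i) ↔ (∀ i ∈ S, E i jl.1) := by
    intro jl
    constructor
    · intro h i hi
      by_contra hE
      have := h i hi
      simp [hE] at this
      exact hb i jl.1 jl.2 this
    · intro h i hi
      simp [h i hi]
  have : ((Finset.univ : Finset (Fin m × Fin (n + 1))).toList.countP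
      (fun jl => decide (∀ i ∈ S, (if E i jl.1 then a i else b i jl.1 jl.2) = a i)))
      = ((Finset.univ : Finset (Fin m × Fin (n + 1))).filter
          (fun jl => ∀ i ∈ S, E i jl.1)).card := by
    rw [List.countP_eq_length_filter]
    rw [← Multiset.coe_card, ← Multiset.filter_coe, Finset.coe_toList]
    simp only [Finset.card_filter, Finset.filter]
    congr 1
    refine Multiset.filter_congr ?_
    intro x _
    exact hpred x
  rw [this]
  have : ((Finset.univ : Finset (Fin m × Fin (n + 1))).filter
          (fun jl => ∀ i ∈ S, E i jl.1))
      = (Finset.univ.filter (fun j : Fin m => ∀ i ∈ S, E i j)) ×ˢ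
        (Finset.univ : Finset (Fin (n + 1))) := by
    ext jl
    simp
  rw [this, Finset.card_product]
  simp [Nat.mul_comm]

/-- Equivalence of the decision problems: with `M = n+1` and `ω = M·k`, the
bipartite graph `G` has a biclique `(S, T)` with `|S|·|T| ≥ k` iff some
position set `S` satisfies `U(S) ≥ ω` on the reduction corpus. -/
theorem stmt5 {n m : ℕ} {Sig : Type*} [DecidableEq Sig]
    (E : Fin n → Fin m → Prop) [∀ i j, Decidable (E i j)]
    (a : Fin n → Sig) (b : Fin n → Fin m → Fin (n + 1) → Sig)
    (hb : ∀ i j ℓ, b i j ℓ ≠ a i) (k : ℕ) :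
    (∃ (S : Finset (Fin n)) (T : Finset (Fin m)),
        (∀ i ∈ S, ∀ j ∈ T, E i j) ∧ k ≤ S.card * T.card) ↔
    (∃ S : Finset (Fin n), (n + 1) * k ≤ U (redCorpus E a b) a S) := by
  constructor
  · rintro ⟨S, T, hST, hk⟩
    refine ⟨S, ?_⟩
    unfold U
    rw [occ_red E a b hb S]
    have hT : T ⊆ Finset.univ.filter (fun j : Fin m => ∀ i ∈ S, E i j) := by
      intro j hj
      simp only [Finset.mem_filter, Finset.mem_univ, true_and]
      exact fun i hi => hST i hi j hj
    calc (n + 1) * k ≤ (n + 1) * (S.card * T.card) := Nat.mul_le_mul_left _ hk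
      _ ≤ (n + 1) * (S.card * (Finset.univ.filter (fun j : Fin m => ∀ i ∈ S, E i j)).card) :=
          Nat.mul_le_mul_left _ (Nat.mul_le_mul_left _ (Finset.card_le_card hT))
      _ = S.card * ((n + 1) * (Finset.univ.filter (fun j : Fin m => ∀ i ∈ S, E i j)).card) := by
          ring
  · rintro ⟨S, hS⟩
    refine ⟨S, Finset.univ.filter (fun j : Fin m => ∀ i ∈ S, E i j), ?_, ?_⟩
    · intro i hi j hj
      exact (Finset.mem_filter.mp hj).2 i hi
    · unfold U at hS
      rw [occ_red E a b hb S] at hS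
      have : (n + 1) * k ≤ (n + 1) * (S.card *
          (Finset.univ.filter (fun j : Fin m => ∀ i ∈ S, E i j)).card) := by
        calc (n + 1) * k ≤ _ := hS
          _ = _ := by ring
      exact Nat.le_of_mul_le_mul_left this (Nat.succ_pos n)
end
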